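/- arXiv:0705.3342 — 2 statements merged into one kernel-verified Lean document; each statement's English description precedes it below -/
import Mathlib

section
/- P-almost surely, T_n / n converges to 1 + m as n → ∞. -/
open MeasureTheory ProbabilityTheory Filter

noncomputable section

/-- The simple random walk `Y_n = η_1 + ⋯ + η_n`, with `Y_0 = 0`. -/
def walk {Ω : Type*} (η : ℕ → Ω → ℤ) (n : ℕ) (ω : Ω) : ℤ :=
  ∑ k ∈ Finset.range n, η (k + 1) ω

/-- The local time `N_n(y) = #{0 ≤ k ≤ n : Y_k = y}` of the walk. -/
def localTime {Ω : Type*} (η : ℕ → Ω → ℤ) (n : ℕ) (y : ℤ) (ω : Ω) : ℕ :=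
  ((Finset.range (n + 1)).filter fun k => walk η k ω = y).card

/-- The random times `T_n = n + Σ_{y∈ℤ} Σ_{i=1}^{N_{n−1}(y)} ξ_i^{(y)}`, with `T_0 = 0`.
Since `|Y_k| ≤ k ≤ n - 1`, the sum over `y ∈ ℤ` reduces to the sum over `y ∈ [-n, n]`. -/
def hitTime {Ω : Type*} (η : ℕ → Ω → ℤ) (ξ : ℕ → ℤ → Ω → ℕ) : ℕ → Ω → ℕ
  | 0, _ => 0
  | n + 1, ω => (n + 1) + ∑ y ∈ Finset.Icc (-(n + 1 : ℤ)) (n + 1),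
      ∑ i ∈ Finset.Icc 1 (localTime η n y ω), ξ i y ω

/-!
Label time `k` by the pair `(N_k(Y_k), Y_k)`: it is the `N_k(Y_k)`-th visit of the walk to `Y_k`.
Distinct times get distinct labels, and the labels of the times `0, …, n` are exactly the pairs
`(i, y)` with `1 ≤ i ≤ N_n(y)`, so `T_{n+1} = n + 1 + Σ_{k ≤ n} ξ` at the label of `k`. For a
fixed step path the summands are thus distinct members of an i.i.d. geometric family, and the
strong law of large numbers gives `T_n / n → 1 + m`. As the walk is independent of the family `ξ`,
their joint law is a product measure, and Fubini turns "for almost every path, almost surely" into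
"almost surely".
-/

open scoped Topology

theorem strong_law_ae_real_comp_injective {Ω ι : Type*} [MeasurableSpace Ω] {μ : Measure Ω}
    {X : ι → Ω → ℝ} {j : ι} (hint : Integrable (X j) μ)
    (hindep : Pairwise fun i i' => X i ⟂ᵢ[μ] X i') (hident : ∀ i, IdentDistrib (X i) (X j) μ μ)
    {σ : ℕ → ι} (hσ : Function.Injective σ) :
    ∀ᵐ ω ∂μ, Tendsto (fun n : ℕ => (∑ k ∈ Finset.range n, X (σ k) ω) / n) atTop (𝓝 μ[X j]) := by
  have hlaw := strong_law_ae_real (fun k => X (σ k)) ((hident _).integrable_iff.2 hint)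
    (fun k l hkl => hindep (hσ.ne hkl)) (fun k => (hident _).trans (hident _).symm)
  rwa [(hident (σ 0)).integral_eq] at hlaw

theorem ae_eq_or_eq_of_measure_add_eq_one {Ω α : Type*} [MeasurableSpace Ω] [MeasurableSpace α]
    [MeasurableSingletonClass α] {μ : Measure Ω} [IsProbabilityMeasure μ] {X : Ω → α}
    (hX : Measurable X) {a b : α} (hab : a ≠ b) (h : μ {ω | X ω = a} + μ {ω | X ω = b} = 1) :
    ∀ᵐ ω ∂μ, X ω = a ∨ X ω = b := by
  have hmeas : ∀ c, MeasurableSet {ω | X ω = c} := fun c => hX (measurableSet_singleton c)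
  have hdisj : Disjoint {ω | X ω = a} {ω | X ω = b} :=
    Set.disjoint_left.2 fun ω ha hb => hab (ha.symm.trans hb)
  refine (ae_mem_iff_measure_eq ((hmeas a).union (hmeas b)).nullMeasurableSet).2 ?_
  rwa [measure_union hdisj (hmeas b), measure_univ]

theorem ae_of_indepFun_of_ae_ae {Ω α β : Type*} [MeasurableSpace Ω] [MeasurableSpace α]
    [MeasurableSpace β] {μ : Measure Ω} [IsFiniteMeasure μ] {F : Ω → α} {G : Ω → β}
    (hF : AEMeasurable F μ) (hG : AEMeasurable G μ) (hFG : F ⟂ᵢ[μ] G) {C : Set (α × β)}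
    (hC : MeasurableSet C) (h : ∀ᵐ a ∂μ.map F, ∀ᵐ ω ∂μ, (a, G ω) ∈ C) :
    ∀ᵐ ω ∂μ, (F ω, G ω) ∈ C := by
  refine (ae_map_iff (p := (· ∈ C)) (hF.prodMk hG) hC).1 ?_
  rw [hFG.map_prod_eq_prod_map_map hF hG, Measure.ae_prod_mem_iff_ae_ae_mem hC]
  filter_upwards [h] with a ha
  exact (ae_map_iff (p := fun b => (a, b) ∈ C) hG (measurable_prodMk_left hC)).2 ha

section Geometric

variable {p : unitInterval}

theorem unitInterval.norm_one_sub_lt_one (hp : p ≠ 0) : ‖(1 - p : ℝ)‖ < 1 := by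
  have : (0 : ℝ) < p := lt_of_le_of_ne p.2.1 fun h => hp (Subtype.ext h.symm)
  rw [Real.norm_eq_abs, abs_lt]
  constructor <;> linarith [p.2.2]

theorem integrable_natCast_geometricMeasure (hp : p ≠ 0) :
    Integrable (fun n : ℕ => (n : ℝ)) (geometricMeasure p) := by
  rw [integrable_geometricMeasure_iff hp]
  have hr := unitInterval.norm_one_sub_lt_one hp
  refine ((summable_pow_mul_geometric_of_norm_lt_one 1 hr).mul_right (p : ℝ)).congr fun n => ?_
  simp only [pow_one, Real.norm_natCast]
  ring

theorem integral_natCast_geometricMeasure (hp : p ≠ 0) :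
    ∫ n, (n : ℝ) ∂geometricMeasure p = (1 - p) / p := by
  calc ∫ n, (n : ℝ) ∂geometricMeasure p
      = (∑' n : ℕ, n * (1 - p : ℝ) ^ n) * p := by
        rw [integral_geometricMeasure hp, ← tsum_mul_right]
        exact tsum_congr fun n => by rw [smul_eq_mul]; ring
    _ = (1 - p) / p := by
        rw [tsum_coe_mul_geometric_of_norm_lt_one (unitInterval.norm_one_sub_lt_one hp),
          sub_sub_cancel]
        field_simp

theorem map_eq_geometricMeasure {Ω : Type*} [MeasurableSpace Ω] {μ : Measure Ω} {X : Ω → ℕ}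
    (hX : Measurable X) (hp : p ≠ 0)
    (h : ∀ k, μ {ω | X ω = k} = ENNReal.ofReal (p * (1 - p) ^ k)) :
    μ.map X = geometricMeasure p :=
  Measure.ext_of_singleton fun k => by
    rw [Measure.map_apply hX (measurableSet_singleton k), geometricMeasure_singleton hp, mul_comm]
    exact h k

theorem integrable_natCast_of_map_eq_geometricMeasure {Ω : Type*} [MeasurableSpace Ω]
    {μ : Measure Ω} {X : Ω → ℕ} (hX : Measurable X) (hp : p ≠ 0)
    (hlaw : μ.map X = geometricMeasure p) : Integrable (fun ω => (X ω : ℝ)) μ := by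
  refine (integrable_map_measure (g := fun n : ℕ => (n : ℝ)) (by fun_prop) hX.aemeasurable).1 ?_
  rw [hlaw]
  exact integrable_natCast_geometricMeasure hp

theorem integral_natCast_of_map_eq_geometricMeasure {Ω : Type*} [MeasurableSpace Ω]
    {μ : Measure Ω} {X : Ω → ℕ} (hX : Measurable X) (hp : p ≠ 0)
    (hlaw : μ.map X = geometricMeasure p) : ∫ ω, (X ω : ℝ) ∂μ = (1 - p) / p := by
  rw [← integral_map hX.aemeasurable (by fun_prop), hlaw, integral_natCast_geometricMeasure hp]

end Geometric

section SamplePath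

variable {Ω : Type*} (η : ℕ → Ω → ℤ) (ω : Ω)

theorem walk_succ (n : ℕ) : walk η (n + 1) ω = walk η n ω + η (n + 1) ω :=
  Finset.sum_range_succ _ n

theorem abs_walk_le (hη : ∀ k, η (k + 1) ω = 1 ∨ η (k + 1) ω = -1) (n : ℕ) :
    |walk η n ω| ≤ n := by
  induction n with
  | zero => simp [walk]
  | succ n ih =>
    rw [walk_succ, abs_le] at *
    rcases hη n with h | h <;> rw [h] <;> push_cast <;> omega

theorem localTime_zero (y : ℤ) :
    localTime η 0 y ω = if walk η 0 ω = y then 1 else 0 := by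
  rw [localTime, Finset.range_one, Finset.filter_singleton]
  split_ifs <;> rfl

theorem localTime_succ (n : ℕ) (y : ℤ) :
    localTime η (n + 1) y ω = localTime η n y ω + if walk η (n + 1) ω = y then 1 else 0 := by
  rw [localTime, Finset.range_add_one, Finset.filter_insert]
  split_ifs <;> simp [localTime]

theorem localTime_mono {m n : ℕ} (h : m ≤ n) (y : ℤ) : localTime η m y ω ≤ localTime η n y ω :=
  Finset.card_le_card <| Finset.filter_subset_filter _ <| Finset.range_subset_range.2 (by omega)

theorem one_le_localTime_walk (n : ℕ) : 1 ≤ localTime η n (walk η n ω) ω :=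
  Finset.card_pos.2 ⟨n, by simp⟩

theorem localTime_lt_of_lt {k l : ℕ} (hkl : k < l) :
    localTime η k (walk η l ω) ω < localTime η l (walk η l ω) ω := by
  obtain ⟨m, rfl⟩ := Nat.exists_eq_add_of_lt hkl
  rw [localTime_succ, if_pos rfl]
  exact Nat.lt_succ_of_le (localTime_mono η ω (by omega) _)

/-- Time `k` is the `i`-th visit of the walk to the site `y`, where `(i, y) = visitLabel η ω k`. -/
def visitLabel (k : ℕ) : ℕ × ℤ := (localTime η k (walk η k ω) ω, walk η k ω)

theorem visitLabel_injective : Function.Injective (visitLabel η ω) := by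
  refine .of_lt_imp_ne fun k l hkl h => ?_
  have hwalk : walk η k ω = walk η l ω := congrArg Prod.snd h
  have hfst : localTime η k (walk η k ω) ω = localTime η l (walk η l ω) ω := congrArg Prod.fst h
  rw [hwalk] at hfst
  exact (localTime_lt_of_lt η ω hkl).ne hfst

theorem exists_visitLabel_eq {n i : ℕ} {y : ℤ} (hi : 1 ≤ i) (hin : i ≤ localTime η n y ω) :
    ∃ k ≤ n, visitLabel η ω k = (i, y) := by
  induction n with
  | zero =>
    rw [localTime_zero] at hin
    split_ifs at hin with hy
    · refine ⟨0, le_rfl, ?_⟩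
      simp only [visitLabel, localTime_zero, hy, if_true, Prod.mk.injEq, and_true]
      omega
    · omega
  | succ n ih =>
    rcases le_or_gt i (localTime η n y ω) with hle | hlt
    · obtain ⟨k, hk, h⟩ := ih hle
      exact ⟨k, by omega, h⟩
    · rw [localTime_succ] at hin
      split_ifs at hin with hy
      · refine ⟨n + 1, le_rfl, ?_⟩
        simp only [visitLabel, localTime_succ, hy, if_true, Prod.mk.injEq, and_true]
        omega
      · omega

theorem hitTime_succ_eq_sum_visitLabel (ξ : ℕ → ℤ → Ω → ℕ)
    (hη : ∀ k, η (k + 1) ω = 1 ∨ η (k + 1) ω = -1) (n : ℕ) :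
    hitTime η ξ (n + 1) ω =
      n + 1 + ∑ k ∈ Finset.range (n + 1), ξ (visitLabel η ω k).1 (visitLabel η ω k).2 ω := by
  rw [hitTime, Finset.sum_sigma']
  congr 1
  symm
  refine Finset.sum_bij (fun k _ => ⟨(visitLabel η ω k).2, (visitLabel η ω k).1⟩) ?_ ?_ ?_
    (fun _ _ => rfl)
  · intro k hk
    have hwalk := abs_le.1 (abs_walk_le η ω hη k)
    simp only [Finset.mem_range] at hk
    simp only [visitLabel, Finset.mem_sigma, Finset.mem_Icc]
    exact ⟨⟨by omega, by omega⟩, one_le_localTime_walk η ω k, localTime_mono η ω (by omega) _⟩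
  · intro k _ l _ h
    exact visitLabel_injective η ω (Prod.ext (congrArg (·.2) h) (congrArg (·.1) h))
  · rintro ⟨y, i⟩ hyi
    simp only [Finset.mem_sigma, Finset.mem_Icc] at hyi
    obtain ⟨k, hk, hlabel⟩ := exists_visitLabel_eq η ω hyi.2.1 hyi.2.2
    exact ⟨k, Finset.mem_range.2 (by omega), by simp [hlabel]⟩

end SamplePath

theorem hitTime_eq_hitTime_path {Ω : Type*} (η : ℕ → Ω → ℤ) (ξ : ℕ → ℤ → Ω → ℕ) (n : ℕ)
    (ω : Ω) :
    hitTime η ξ n ω = hitTime (fun k (a : ℕ → ℤ) => a k) (fun i y _ => ξ i y ω) n (η · ω) := by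
  cases n <;> rfl

section Measurability

variable {Ω : Type*} [MeasurableSpace Ω] {η : ℕ → Ω → ℤ}

theorem measurable_walk (hη : ∀ k, Measurable (η k)) (n : ℕ) : Measurable (walk η n) :=
  Finset.measurable_sum _ fun k _ => hη (k + 1)

theorem measurable_localTime (hη : ∀ k, Measurable (η k)) (n : ℕ) (y : ℤ) :
    Measurable (localTime η n y) := by
  have hsum : localTime η n y = fun ω => ∑ k ∈ Finset.range (n + 1),
      if walk η k ω = y then 1 else 0 := funext fun ω => Finset.card_filter _ _
  rw [hsum]
  exact Finset.measurable_sum _ fun k _ =>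
    Measurable.ite (measurable_walk hη k (measurableSet_singleton y)) measurable_const
      measurable_const

theorem measurable_hitTime (hη : ∀ k, Measurable (η k)) {ξ : ℕ → ℤ → Ω → ℕ}
    (hξ : ∀ i y, Measurable (ξ i y)) (n : ℕ) :
    Measurable (hitTime η ξ n) := by
  cases n with
  | zero => exact measurable_const
  | succ n =>
    refine measurable_const.add (Finset.measurable_sum _ fun y _ => ?_)
    have hpartial : Measurable fun z : Ω × ℕ => ∑ i ∈ Finset.Icc 1 z.2, ξ i y z.1 :=
      measurable_from_prod_countable_left fun l =>
        Finset.measurable_sum (Finset.Icc 1 l) fun i _ => hξ i y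
    exact hpartial.comp (measurable_id.prodMk (measurable_localTime hη n y))

end Measurability

theorem ae_tendsto_hitTime_path_div {Ω : Type*} [MeasurableSpace Ω] {μ : Measure Ω}
    {ξ : ℕ → ℤ → Ω → ℕ} (hξ_int : Integrable (fun ω => (ξ 0 0 ω : ℝ)) μ)
    (hξ_indep : Pairwise fun iy iy' : ℕ × ℤ => ξ iy.1 iy.2 ⟂ᵢ[μ] ξ iy'.1 iy'.2)
    (hξ_ident : ∀ i y, IdentDistrib (ξ i y) (ξ 0 0) μ μ)
    {a : ℕ → ℤ} (ha : ∀ k, a (k + 1) = 1 ∨ a (k + 1) = -1) :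
    ∀ᵐ ω ∂μ, Tendsto
      (fun n : ℕ => (hitTime (fun k (b : ℕ → ℤ) => b k) (fun i y _ => ξ i y ω) n a : ℝ) / n)
      atTop (𝓝 (1 + ∫ ω, (ξ 0 0 ω : ℝ) ∂μ)) := by
  have hslln := strong_law_ae_real_comp_injective (X := fun iy ω => (ξ iy.1 iy.2 ω : ℝ))
    (j := (0, 0)) hξ_int
    (fun _ _ h => (hξ_indep h).comp measurable_from_nat measurable_from_nat)
    (fun iy => (hξ_ident iy.1 iy.2).comp measurable_from_nat)
    (visitLabel_injective (fun k (b : ℕ → ℤ) => b k) a)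
  filter_upwards [hslln] with ω hω
  refine (tendsto_const_nhds.add hω).congr' ((eventually_ge_atTop 1).mono fun n hn => ?_)
  obtain ⟨n, rfl⟩ := Nat.exists_eq_add_of_le' hn
  dsimp only
  rw [hitTime_succ_eq_sum_visitLabel _ _ _ ha]
  push_cast
  field_simp

theorem measurableSet_setOf_tendsto_hitTime_path (l : ℝ) :
    MeasurableSet {z : (ℕ → ℤ) × (ℕ × ℤ → ℕ) | Tendsto (fun n : ℕ =>
      (hitTime (fun k (b : ℕ → ℤ) => b k) (fun i y _ => z.2 (i, y)) n z.1 : ℝ) / n)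
      atTop (𝓝 l)} := by
  refine measurableSet_tendsto _ fun n => (measurable_from_nat.comp ?_).div_const _
  have hpath : (fun z : (ℕ → ℤ) × (ℕ × ℤ → ℕ) =>
      hitTime (fun k (b : ℕ → ℤ) => b k) (fun i y _ => z.2 (i, y)) n z.1) =
      hitTime (fun k z => z.1 k) (fun i y z => z.2 (i, y)) n :=
    funext fun z =>
      (hitTime_eq_hitTime_path (fun k z => z.1 k) (fun i y z => z.2 (i, y)) n z).symm
  rw [hpath]
  exact measurable_hitTime (fun k => (measurable_pi_apply k).comp measurable_fst)
    (fun i y => (measurable_pi_apply (i, y)).comp measurable_snd) n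

theorem hitTime_div_tendsto_ae_general
    {Ω : Type*} [MeasureSpace Ω] [IsProbabilityMeasure (ℙ : Measure Ω)]
    (p : ℝ) (hp0 : 0 < p) (hp1 : p < 1)
    (η : ℕ → Ω → ℤ) (ξ : ℕ → ℤ → Ω → ℕ)
    (hη_meas : ∀ k, Measurable (η k))
    (hη_one : ∀ k, ℙ {ω | η k ω = 1} = 1/2)
    (hη_negone : ∀ k, ℙ {ω | η k ω = -1} = 1/2)
    (hξ_meas : ∀ i y, Measurable (ξ i y))
    (hξ_indep : iIndepFun (fun iy : ℕ × ℤ => ξ iy.1 iy.2) ℙ)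
    (hξ_geom : ∀ i y k, ℙ {ω | ξ i y ω = k} = ENNReal.ofReal (p * (1 - p) ^ k))
    (hξη_indep : IndepFun (fun ω (k : ℕ) => η k ω) (fun ω (iy : ℕ × ℤ) => ξ iy.1 iy.2 ω) ℙ) :
    ∀ᵐ ω ∂(ℙ : Measure Ω),
      Tendsto (fun n : ℕ => (hitTime η ξ n ω : ℝ) / n) atTop
        (nhds (1 + (1 - p) / p)) := by
  set q : unitInterval := ⟨p, hp0.le, hp1.le⟩
  have hq : q ≠ 0 := fun h => hp0.ne' (congrArg Subtype.val h)
  have hlaw : ∀ i y, (ℙ : Measure Ω).map (ξ i y) = geometricMeasure q := fun i y =>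
    map_eq_geometricMeasure (hξ_meas i y) hq (hξ_geom i y)
  have hsteps : ∀ᵐ ω, ∀ k, η (k + 1) ω = 1 ∨ η (k + 1) ω = -1 := ae_all_iff.2 fun k =>
    ae_eq_or_eq_of_measure_add_eq_one (hη_meas _) (by decide)
      (by rw [hη_one, hη_negone, ENNReal.add_halves])
  have hF : Measurable fun ω (k : ℕ) => η k ω := measurable_pi_lambda _ hη_meas
  have hG : Measurable fun ω (iy : ℕ × ℤ) => ξ iy.1 iy.2 ω :=
    measurable_pi_lambda _ fun iy => hξ_meas iy.1 iy.2
  have hgood : MeasurableSet {a : ℕ → ℤ | ∀ k, a (k + 1) = 1 ∨ a (k + 1) = -1} := by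
    measurability
  have hmean : ∫ ω, (ξ 0 0 ω : ℝ) = (1 - p) / p :=
    integral_natCast_of_map_eq_geometricMeasure (hξ_meas 0 0) hq (hlaw 0 0)
  have hpaths := ((ae_map_iff hF.aemeasurable hgood).2 hsteps).mono fun a ha =>
    hmean ▸ ae_tendsto_hitTime_path_div
      (integrable_natCast_of_map_eq_geometricMeasure (hξ_meas 0 0) hq (hlaw 0 0))
      (fun _ _ h => hξ_indep.indepFun h)
      (fun i y => ⟨(hξ_meas i y).aemeasurable, (hξ_meas 0 0).aemeasurable, by rw [hlaw, hlaw]⟩) ha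
  filter_upwards [ae_of_indepFun_of_ae_ae hF.aemeasurable hG.aemeasurable hξη_indep
    (measurableSet_setOf_tendsto_hitTime_path _) hpaths] with ω hω
  simp_rw [hitTime_eq_hitTime_path η ξ]
  exact hω

/-- `P`-almost surely, `T_n / n → 1 + m` as `n → ∞`, where `m = (1-p)/p`. -/
theorem hitTime_div_tendsto_ae
    {Ω : Type*} [MeasureSpace Ω] [IsProbabilityMeasure (ℙ : Measure Ω)]
    (p : ℝ) (hp0 : 0 < p) (hp1 : p < 1)
    (η : ℕ → Ω → ℤ) (ξ : ℕ → ℤ → Ω → ℕ)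
    (hη_meas : ∀ k, Measurable (η k))
    (hη_indep : iIndepFun η ℙ)
    (hη_one : ∀ k, ℙ {ω | η k ω = 1} = 1/2)
    (hη_negone : ∀ k, ℙ {ω | η k ω = -1} = 1/2)
    (hξ_meas : ∀ i y, Measurable (ξ i y))
    (hξ_indep : iIndepFun (fun iy : ℕ × ℤ => ξ iy.1 iy.2) ℙ)
    (hξ_geom : ∀ i y k, ℙ {ω | ξ i y ω = k} = ENNReal.ofReal (p * (1 - p) ^ k))
    (hξη_indep : IndepFun (fun ω (k : ℕ) => η k ω) (fun ω (iy : ℕ × ℤ) => ξ iy.1 iy.2 ω) ℙ) :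
    ∀ᵐ ω ∂(ℙ : Measure Ω),
      Tendsto (fun n : ℕ => (hitTime η ξ n ω : ℝ) / n) atTop
        (nhds (1 + (1 - p) / p)) :=
  hitTime_div_tendsto_ae_general p hp0 hp1 η ξ hη_meas hη_one hη_negone hξ_meas hξ_indep hξ_geom
    hξη_indep
end
end

section
/- There exists a constant C > 0 such that for all n ≥ 1 and all x, y ∈ ℤ, E[ ( N_n(x) − N_n(y) )² ] ≤ C |x − y| n^{1/2}. -/
/-!
Write `D_k = 𝟙{Y_k = x} - 𝟙{Y_k = y}`, so that `N_n(x) - N_n(y) = ∑_{k ≤ n} D_k` and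
`(∑ D_k)² ≤ 2 ∑_{j ≤ k} D_j D_k`. Restarting the walk at time `j` (Markov property),
`E[D_j D_{j+m}] = P(Y_j = x) (q_m(0) - q_m(y - x)) + P(Y_j = y) (q_m(0) - q_m(x - y))`, where `q_m`
is the law of the restarted walk at time `m`.

Both resulting sums are controlled by the discrete Tanaka formula
`∑_{m < M} P(Y_m = w) = E|Y_M - w| - |w|`, which comes from `|z - w|` having discrete Laplacian
`2 𝟙{z = w}`. Since `w ↦ E|Y_M - w| - |w|` is `2`-Lipschitz, the sum over `m` is at most
`2 |x - y| (P(Y_j = x) + P(Y_j = y))`; and `∑_{j ≤ n} P(Y_j = a) ≤ E|Y_{n+1}| ≤ √(n + 1)`.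
-/

open MeasureTheory ProbabilityTheory Filter

noncomputable section

open Finset

lemma sq_sum_range_le_two_mul_sum_sum (a : ℕ → ℝ) (N : ℕ) :
    (∑ k ∈ range N, a k) ^ 2 ≤ 2 * ∑ j ∈ range N, ∑ m ∈ range (N - j), a j * a (j + m) := by
  suffices h : (∑ k ∈ range N, a k) ^ 2 + ∑ k ∈ range N, a k ^ 2
      = 2 * ∑ j ∈ range N, ∑ m ∈ range (N - j), a j * a (j + m) by
    linarith [sum_nonneg fun k (_ : k ∈ range N) => sq_nonneg (a k)]
  induction N with
  | zero => simp
  | succ N ih =>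
    have hrow : ∀ j ∈ range N, ∑ m ∈ range (N + 1 - j), a j * a (j + m)
        = ∑ m ∈ range (N - j), a j * a (j + m) + a j * a N := by
      intro j hj
      have hjN := (mem_range.1 hj).le
      rw [Nat.sub_add_comm hjN, sum_range_succ, Nat.add_sub_cancel' hjN]
    rw [sum_range_succ a, sum_range_succ (a · ^ 2),
      sum_range_succ (fun j => ∑ m ∈ range (N + 1 - j), a j * a (j + m)), sum_congr rfl hrow,
      sum_add_distrib, ← sum_mul, Nat.add_sub_cancel_left, sum_range_one, add_zero]
    linear_combination ih

lemma abs_add_one_sub_add_abs_sub_one_sub (z w : ℤ) :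
    |z + 1 - w| + |z - 1 - w| = 2 * |z - w| + if z = w then 2 else 0 := by
  split_ifs with h
  · simp [h]
  · rcases lt_or_gt_of_ne h with h | h
    · rw [abs_of_nonpos (by omega), abs_of_neg (by omega), abs_of_neg (by omega)]; ring
    · rw [abs_of_pos (by omega), abs_of_nonneg (by omega), abs_of_pos (by omega)]; ring

def indicatorDiff (x y z : ℤ) : ℝ := (if z = x then 1 else 0) - (if z = y then 1 else 0)

lemma localTime_sub_localTime {Ω : Type*} (η : ℕ → Ω → ℤ) (n : ℕ) (x y : ℤ) (ω : Ω) :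
    (localTime η n x ω : ℝ) - localTime η n y ω
      = ∑ k ∈ range (n + 1), indicatorDiff x y (walk η k ω) := by
  simp only [localTime, natCast_card_filter, indicatorDiff, sum_sub_distrib]

lemma walk_add {Ω : Type*} (η : ℕ → Ω → ℤ) (j m : ℕ) (ω : Ω) :
    walk η (j + m) ω = walk η j ω + walk (fun k => η (j + k)) m ω := by
  simp only [walk, sum_range_add, add_assoc]

lemma ProbabilityTheory.iIndepFun.indepFun_finsetSum_finsetSum {Ω ι β : Type*}
    [MeasurableSpace Ω] {μ : Measure Ω} [AddCommMonoid β] [MeasurableSpace β] [MeasurableAdd₂ β]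
    {f : ι → Ω → β} (h : iIndepFun f μ) (hf : ∀ i, Measurable (f i)) {S T : Finset ι}
    (hST : Disjoint S T) :
    IndepFun (fun ω => ∑ i ∈ S, f i ω) (fun ω => ∑ i ∈ T, f i ω) μ := by
  have hsum : ∀ U : Finset ι, Measurable fun v : U → β => ∑ i, v i := fun U =>
    measurable_fun_sum _ fun i _ => measurable_pi_apply i
  convert (h.indepFun_finset S T hST hf).comp (hsum S) (hsum T) using 1 <;>
    exact funext fun ω => (sum_coe_sort _ _).symm

section

variable {Ω : Type*} [MeasurableSpace Ω] {μ : Measure Ω}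

lemma integral_ite_eq_measureReal {α : Type*} [MeasurableSpace α] [MeasurableSingletonClass α]
    [DecidableEq α] {Z : Ω → α} (hZ : Measurable Z) (a : α) :
    ∫ ω, (if Z ω = a then (1 : ℝ) else 0) ∂μ = μ.real {ω | Z ω = a} := by
  have hs : MeasurableSet {ω | Z ω = a} := hZ (measurableSet_singleton a)
  simp only [← integral_indicator_one hs, Set.indicator_apply, Set.mem_ofPred_eq, Pi.one_apply]

lemma ae_norm_comp_le_sum {α : Type*} {Z : Ω → α} {s : Finset α} (hs : ∀ᵐ ω ∂μ, Z ω ∈ s)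
    (f : α → ℝ) : ∀ᵐ ω ∂μ, ‖f (Z ω)‖ ≤ ∑ a ∈ s, ‖f a‖ :=
  hs.mono fun _ h => single_le_sum (f := fun a => ‖f a‖) (fun _ _ => norm_nonneg _) h

lemma integral_abs_sub_le_integral_abs_sub_add [IsProbabilityMeasure μ] {X : Ω → ℝ}
    (hX : Integrable X μ) (a b : ℝ) :
    ∫ ω, |X ω - a| ∂μ ≤ ∫ ω, |X ω - b| ∂μ + |a - b| := by
  have hb : Integrable (fun ω => |X ω - b|) μ := (hX.sub (integrable_const b)).abs
  calc ∫ ω, |X ω - a| ∂μ ≤ ∫ ω, (|X ω - b| + |a - b|) ∂μ :=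
        integral_mono (hX.sub (integrable_const a)).abs (hb.add (integrable_const _))
          fun ω => by simpa [abs_sub_comm b a] using abs_sub_le (X ω) b a
    _ = ∫ ω, |X ω - b| ∂μ + |a - b| := by simp [integral_add hb (integrable_const _)]

lemma ae_eq_one_or_eq_neg_one [IsProbabilityMeasure μ] {e : Ω → ℤ} (he : Measurable e)
    (h₁ : μ {ω | e ω = 1} = 1 / 2) (h₂ : μ {ω | e ω = -1} = 1 / 2) :
    ∀ᵐ ω ∂μ, e ω = 1 ∨ e ω = -1 := by
  have hm : ∀ s : ℤ, MeasurableSet {ω | e ω = s} := fun s => he (measurableSet_singleton s)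
  refine (ae_iff_measure_eq ?_).2 ?_
  · exact ((hm 1).union (hm (-1))).nullMeasurableSet
  have hdisj : Disjoint {ω | e ω = 1} {ω | e ω = -1} :=
    Set.disjoint_left.2 fun ω h h' => by simp_all
  rw [Set.ofPred_or, measure_union hdisj (hm (-1)), h₁, h₂, ENNReal.add_halves, measure_univ]

lemma integral_comp_add_eq_average [IsProbabilityMeasure μ] {Z e : Ω → ℤ} (hZ : Measurable Z)
    (he : Measurable e) (hZe : IndepFun Z e μ) (h₁ : μ {ω | e ω = 1} = 1 / 2)
    (h₂ : μ {ω | e ω = -1} = 1 / 2)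
    {f : ℤ → ℝ} (hf₁ : Integrable (fun ω => f (Z ω + 1)) μ)
    (hf₂ : Integrable (fun ω => f (Z ω - 1)) μ) :
    ∫ ω, f (Z ω + e ω) ∂μ = ∫ ω, (f (Z ω + 1) + f (Z ω - 1)) / 2 ∂μ := by
  have hbdd : ∀ s : ℤ, ∀ᵐ ω ∂μ, ‖if e ω = s then (1 : ℝ) else 0‖ ≤ 1 :=
    fun s => .of_forall fun ω => by split_ifs <;> simp
  have hmeas : ∀ s : ℤ, AEStronglyMeasurable (fun ω => if e ω = s then (1 : ℝ) else 0) μ :=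
    fun s => ((measurable_of_countable fun z : ℤ => if z = s then (1 : ℝ) else 0).comp
      he).aestronglyMeasurable
  have hsplit : ∀ (F : ℤ → ℝ) (s : ℤ), μ {ω | e ω = s} = 1 / 2 →
      ∫ ω, F (Z ω) * (if e ω = s then 1 else 0) ∂μ = (∫ ω, F (Z ω) ∂μ) / 2 := by
    intro F s hs
    rw [hZe.integral_fun_comp_mul_comp (g := fun z => if z = s then 1 else 0) hZ.aemeasurable
      he.aemeasurable (measurable_of_countable _).aestronglyMeasurable
      (measurable_of_countable _).aestronglyMeasurable, integral_ite_eq_measureReal he,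
      measureReal_def, hs]
    simp [div_eq_mul_inv]
  calc ∫ ω, f (Z ω + e ω) ∂μ
      = ∫ ω, (f (Z ω + 1) * (if e ω = 1 then 1 else 0)
          + f (Z ω - 1) * (if e ω = -1 then 1 else 0)) ∂μ := by
        refine integral_congr_ae ?_
        filter_upwards [ae_eq_one_or_eq_neg_one he h₁ h₂] with ω hω
        rcases hω with hω | hω <;> simp [hω, sub_eq_add_neg]
    _ = ∫ ω, (f (Z ω + 1) + f (Z ω - 1)) / 2 ∂μ := by
        rw [integral_add (hf₁.mul_bdd (hmeas 1) (hbdd 1)) (hf₂.mul_bdd (hmeas (-1)) (hbdd (-1))),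
          hsplit (fun z => f (z + 1)) 1 h₁, hsplit (fun z => f (z - 1)) (-1) h₂, integral_div,
          integral_add hf₁ hf₂, add_div]

end

structure IsRademacherSeq {Ω : Type*} [MeasurableSpace Ω] (η : ℕ → Ω → ℤ) (μ : Measure Ω) :
    Prop where
  measurable : ∀ k, Measurable (η k)
  indep : iIndepFun η μ
  measure_eq_one : ∀ k, μ {ω | η k ω = 1} = 1 / 2
  measure_eq_neg_one : ∀ k, μ {ω | η k ω = -1} = 1 / 2

namespace IsRademacherSeq

variable {Ω : Type*} [MeasurableSpace Ω] {μ : Measure Ω} {η : ℕ → Ω → ℤ}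

lemma shift (hη : IsRademacherSeq η μ) (j : ℕ) : IsRademacherSeq (fun k => η (j + k)) μ :=
  ⟨fun _ => hη.measurable _, hη.indep.precomp (add_right_injective j),
    fun _ => hη.measure_eq_one _, fun _ => hη.measure_eq_neg_one _⟩

lemma measurable_walk (hη : IsRademacherSeq η μ) (n : ℕ) : Measurable (walk η n) :=
  measurable_fun_sum _ fun k _ => hη.measurable (k + 1)

lemma indepFun_walk_shift (hη : IsRademacherSeq η μ) (j m : ℕ) :
    IndepFun (walk η j) (walk (fun k => η (j + k)) m) μ := by
  have hξ : iIndepFun (fun k => η (k + 1)) μ := hη.indep.precomp (add_left_injective 1)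
  have hdisj : Disjoint (range j) (Ico j (j + m)) :=
    disjoint_left.2 fun k hk hk' => by simp only [mem_range, mem_Ico] at hk hk'; omega
  convert hξ.indepFun_finsetSum_finsetSum (fun k => hη.measurable (k + 1)) hdisj using 1
  · rfl
  · funext ω
    rw [sum_Ico_eq_sum_range, Nat.add_sub_cancel_left]
    simp only [walk, add_assoc]

theorem integral_ite_walk_mul_comp_walk_add (hη : IsRademacherSeq η μ) (j m : ℕ) (a : ℤ)
    (g : ℤ → ℝ) :
    ∫ ω, (if walk η j ω = a then 1 else 0) * g (walk η (j + m) ω) ∂μ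
      = μ.real {ω | walk η j ω = a} * ∫ ω, g (a + walk (fun k => η (j + k)) m ω) ∂μ := by
  have hpt : ∀ ω, (if walk η j ω = a then (1 : ℝ) else 0) * g (walk η (j + m) ω)
      = (if walk η j ω = a then 1 else 0) * g (a + walk (fun k => η (j + k)) m ω) := by
    intro ω
    rw [walk_add]
    split_ifs with h <;> simp [h]
  simp_rw [hpt]
  rw [(hη.indepFun_walk_shift j m).integral_fun_comp_mul_comp
      (f := fun z => if z = a then (1 : ℝ) else 0) (g := fun z => g (a + z))
      (hη.measurable_walk j).aemeasurable ((hη.shift j).measurable_walk m).aemeasurable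
      (measurable_of_countable _).aestronglyMeasurable
      (measurable_of_countable _).aestronglyMeasurable,
    integral_ite_eq_measureReal (hη.measurable_walk j)]

variable [IsProbabilityMeasure μ]

lemma ae_walk_mem_Icc (hη : IsRademacherSeq η μ) (n : ℕ) :
    ∀ᵐ ω ∂μ, walk η n ω ∈ Icc (-n : ℤ) n := by
  have hsign : ∀ᵐ ω ∂μ, ∀ k, η k ω = 1 ∨ η k ω = -1 := ae_all_iff.2 fun k =>
    ae_eq_one_or_eq_neg_one (hη.measurable k) (hη.measure_eq_one k) (hη.measure_eq_neg_one k)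
  filter_upwards [hsign] with ω hω
  have hstep : ∀ k, |η (k + 1) ω| = 1 := fun k => by rcases hω (k + 1) with h | h <;> simp [h]
  have habs : |walk η n ω| ≤ n := by
    calc |walk η n ω| ≤ ∑ k ∈ range n, |η (k + 1) ω| := abs_sum_le_sum_abs _ _
      _ = n := by simp [hstep]
  exact mem_Icc.2 (abs_le.1 habs)

lemma integrable_comp_walk (hη : IsRademacherSeq η μ) (n : ℕ) (f : ℤ → ℝ) :
    Integrable (fun ω => f (walk η n ω)) μ :=
  .of_bound ((measurable_of_countable f).comp (hη.measurable_walk n)).aestronglyMeasurable _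
    (ae_norm_comp_le_sum (hη.ae_walk_mem_Icc n) f)

lemma integrable_comp_walk_mul_comp_walk (hη : IsRademacherSeq η μ) (j k : ℕ) (f g : ℤ → ℝ) :
    Integrable (fun ω => f (walk η j ω) * g (walk η k ω)) μ :=
  (hη.integrable_comp_walk k g).bdd_mul
    ((measurable_of_countable f).comp (hη.measurable_walk j)).aestronglyMeasurable
    (ae_norm_comp_le_sum (hη.ae_walk_mem_Icc j) f)

lemma integral_comp_walk_succ (hη : IsRademacherSeq η μ) (n : ℕ) (f : ℤ → ℝ) :
    ∫ ω, f (walk η (n + 1) ω) ∂μ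
      = ∫ ω, (f (walk η n ω + 1) + f (walk η n ω - 1)) / 2 ∂μ := by
  have hstep : walk (fun k => η (n + k)) 1 = η (n + 1) := by
    funext ω; simp [walk]
  have hindep := hη.indepFun_walk_shift n 1
  rw [hstep] at hindep
  simp_rw [walk_add η n 1, hstep]
  exact integral_comp_add_eq_average (hη.measurable_walk n) (hη.measurable _) hindep
    (hη.measure_eq_one _) (hη.measure_eq_neg_one _) (hη.integrable_comp_walk n (fun z => f (z + 1)))
    (hη.integrable_comp_walk n (fun z => f (z - 1)))

theorem sum_measureReal_walk_eq_integral_abs_sub (hη : IsRademacherSeq η μ) (M : ℕ) (w : ℤ) :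
    ∑ m ∈ range M, μ.real {ω | walk η m ω = w} = ∫ ω, |(walk η M ω : ℝ) - w| ∂μ - |(w : ℝ)| := by
  induction M with
  | zero => simp [walk]
  | succ M ih =>
    have hint := hη.integrable_comp_walk M
    have hstep : ∫ ω, |(walk η (M + 1) ω : ℝ) - w| ∂μ
        = ∫ ω, |(walk η M ω : ℝ) - w| ∂μ + μ.real {ω | walk η M ω = w} := by
      rw [hη.integral_comp_walk_succ M (fun z => |(z : ℝ) - w|),
        ← integral_ite_eq_measureReal (hη.measurable_walk M),
        ← integral_add (hint fun z => |(z : ℝ) - w|) (hint fun z => if z = w then 1 else 0)]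
      refine integral_congr_ae (.of_forall fun ω => ?_)
      have := congrArg (Int.cast : ℤ → ℝ) (abs_add_one_sub_add_abs_sub_one_sub (walk η M ω) w)
      push_cast at this ⊢
      split_ifs at this ⊢ <;> linarith
    rw [sum_range_succ, ih, hstep]
    ring

theorem integral_walk_sq (hη : IsRademacherSeq η μ) (n : ℕ) :
    ∫ ω, (walk η n ω : ℝ) ^ 2 ∂μ = n := by
  induction n with
  | zero => simp [walk]
  | succ n ih =>
    have hint := hη.integrable_comp_walk n
    rw [hη.integral_comp_walk_succ n (fun z => (z : ℝ) ^ 2)]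
    calc ∫ ω, ((((walk η n ω + 1 : ℤ) : ℝ) ^ 2 + ((walk η n ω - 1 : ℤ) : ℝ) ^ 2) / 2) ∂μ
        = ∫ ω, ((walk η n ω : ℝ) ^ 2 + 1) ∂μ := by
          refine integral_congr_ae (.of_forall fun ω => ?_)
          push_cast
          ring
      _ = ((n + 1 : ℕ) : ℝ) := by
          rw [integral_add (hint fun z => (z : ℝ) ^ 2) (integrable_const 1), ih]
          simp

theorem integral_abs_walk_le_sqrt (hη : IsRademacherSeq η μ) (n : ℕ) :
    ∫ ω, |(walk η n ω : ℝ)| ∂μ ≤ √n := by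
  have hmemLp : MemLp (fun ω => |(walk η n ω : ℝ)|) 2 μ :=
    .of_bound (hη.integrable_comp_walk n fun z => |(z : ℝ)|).aestronglyMeasurable _
      (ae_norm_comp_le_sum (hη.ae_walk_mem_Icc n) fun z => |(z : ℝ)|)
  have hvar := variance_eq_sub hmemLp
  simp only [Pi.pow_apply, sq_abs, hη.integral_walk_sq] at hvar
  refine (le_abs_self _).trans (Real.abs_le_sqrt ?_)
  linarith [variance_nonneg (fun ω => |(walk η n ω : ℝ)|) μ]

theorem sum_measureReal_walk_le_sqrt (hη : IsRademacherSeq η μ) (M : ℕ) (w : ℤ) :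
    ∑ m ∈ range M, μ.real {ω | walk η m ω = w} ≤ √M := by
  have := integral_abs_sub_le_integral_abs_sub_add (hη.integrable_comp_walk M (↑)) w 0
  simp only [sub_zero] at this
  rw [hη.sum_measureReal_walk_eq_integral_abs_sub]
  linarith [hη.integral_abs_walk_le_sqrt M]

theorem sum_measureReal_walk_zero_sub_le (hη : IsRademacherSeq η μ) (M : ℕ) (w : ℤ) :
    ∑ m ∈ range M, (μ.real {ω | walk η m ω = 0} - μ.real {ω | walk η m ω = w}) ≤ 2 * |(w : ℝ)| := by
  have := integral_abs_sub_le_integral_abs_sub_add (hη.integrable_comp_walk M (↑)) 0 w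
  simp only [sub_zero, zero_sub, abs_neg] at this
  rw [sum_sub_distrib, hη.sum_measureReal_walk_eq_integral_abs_sub,
    hη.sum_measureReal_walk_eq_integral_abs_sub]
  simp only [Int.cast_zero, sub_zero, abs_zero]
  linarith

theorem integral_indicatorDiff_add_walk (hη : IsRademacherSeq η μ) (m : ℕ) (a x y : ℤ) :
    ∫ ω, indicatorDiff x y (a + walk η m ω) ∂μ
      = μ.real {ω | walk η m ω = x - a} - μ.real {ω | walk η m ω = y - a} := by
  simp only [indicatorDiff, ← eq_sub_iff_add_eq']
  rw [integral_sub (hη.integrable_comp_walk m fun z => if z = x - a then 1 else 0)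
      (hη.integrable_comp_walk m fun z => if z = y - a then 1 else 0),
    integral_ite_eq_measureReal (hη.measurable_walk m),
    integral_ite_eq_measureReal (hη.measurable_walk m)]

theorem sum_integral_indicatorDiff_mul_le (hη : IsRademacherSeq η μ) (j M : ℕ) (x y : ℤ) :
    ∑ m ∈ range M, ∫ ω, indicatorDiff x y (walk η j ω) * indicatorDiff x y (walk η (j + m) ω) ∂μ
      ≤ 2 * |(x : ℝ) - y| * (μ.real {ω | walk η j ω = x} + μ.real {ω | walk η j ω = y}) := by
  set q : ℕ → ℤ → ℝ := fun m w => μ.real {ω | walk (fun k => η (j + k)) m ω = w}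
  have hterm : ∀ m, ∫ ω, indicatorDiff x y (walk η j ω) * indicatorDiff x y (walk η (j + m) ω) ∂μ
      = μ.real {ω | walk η j ω = x} * (q m 0 - q m (y - x))
        + μ.real {ω | walk η j ω = y} * (q m 0 - q m (x - y)) := by
    intro m
    have hint := fun a => hη.integrable_comp_walk_mul_comp_walk j (j + m)
      (fun z => if z = a then 1 else 0) (indicatorDiff x y)
    have hsplit : ∀ z c, indicatorDiff x y z * c
        = (if z = x then 1 else 0) * c - (if z = y then 1 else 0) * c := fun _ _ => sub_mul _ _ _
    simp only [hsplit]
    rw [integral_sub (hint x) (hint y), hη.integral_ite_walk_mul_comp_walk_add,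
      hη.integral_ite_walk_mul_comp_walk_add, (hη.shift j).integral_indicatorDiff_add_walk,
      (hη.shift j).integral_indicatorDiff_add_walk, sub_self, sub_self]
    ring
  have hx := (hη.shift j).sum_measureReal_walk_zero_sub_le M (y - x)
  have hy := (hη.shift j).sum_measureReal_walk_zero_sub_le M (x - y)
  rw [Int.cast_sub, abs_sub_comm] at hx
  rw [Int.cast_sub] at hy
  rw [sum_congr rfl fun m _ => hterm m, sum_add_distrib, ← mul_sum, ← mul_sum]
  nlinarith [measureReal_nonneg (μ := μ) (s := {ω | walk η j ω = x}),
    measureReal_nonneg (μ := μ) (s := {ω | walk η j ω = y})]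

theorem integral_sq_localTime_sub_le (hη : IsRademacherSeq η μ) (n : ℕ) (x y : ℤ) :
    ∫ ω, ((localTime η n x ω : ℝ) - localTime η n y ω) ^ 2 ∂μ
      ≤ 8 * |(x : ℝ) - y| * √((n + 1 : ℕ) : ℝ) := by
  set D := indicatorDiff x y
  have hint : ∀ j ∈ range (n + 1), Integrable (fun ω =>
      ∑ m ∈ range (n + 1 - j), D (walk η j ω) * D (walk η (j + m) ω)) μ := fun j _ =>
    integrable_finsetSum _ fun m _ => hη.integrable_comp_walk_mul_comp_walk j (j + m) D D
  calc ∫ ω, ((localTime η n x ω : ℝ) - localTime η n y ω) ^ 2 ∂μ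
      ≤ ∫ ω, 2 * ∑ j ∈ range (n + 1), ∑ m ∈ range (n + 1 - j),
          D (walk η j ω) * D (walk η (j + m) ω) ∂μ := by
        refine integral_mono_of_nonneg (.of_forall fun ω => sq_nonneg _)
          ((integrable_finsetSum _ hint).const_mul 2) (.of_forall fun ω => ?_)
        simp only [localTime_sub_localTime]
        exact sq_sum_range_le_two_mul_sum_sum _ _
    _ = 2 * ∑ j ∈ range (n + 1), ∑ m ∈ range (n + 1 - j),
          ∫ ω, D (walk η j ω) * D (walk η (j + m) ω) ∂μ := by
        rw [integral_const_mul, integral_finsetSum _ hint]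
        congr 1
        exact sum_congr rfl fun j _ => integral_finsetSum _ fun m _ =>
          hη.integrable_comp_walk_mul_comp_walk j (j + m) D D
    _ ≤ 2 * ∑ j ∈ range (n + 1),
          2 * |(x : ℝ) - y| * (μ.real {ω | walk η j ω = x} + μ.real {ω | walk η j ω = y}) := by
        gcongr with j
        exact hη.sum_integral_indicatorDiff_mul_le j (n + 1 - j) x y
    _ = 4 * |(x : ℝ) - y| * (∑ j ∈ range (n + 1), μ.real {ω | walk η j ω = x}
          + ∑ j ∈ range (n + 1), μ.real {ω | walk η j ω = y}) := by
        rw [← mul_sum, sum_add_distrib]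
        ring
    _ ≤ 4 * |(x : ℝ) - y| * (√((n + 1 : ℕ) : ℝ) + √((n + 1 : ℕ) : ℝ)) := by
        gcongr <;> exact hη.sum_measureReal_walk_le_sqrt _ _
    _ = 8 * |(x : ℝ) - y| * √((n + 1 : ℕ) : ℝ) := by ring

end IsRademacherSeq

/-- There is a constant `C > 0` such that for all `n ≥ 1` and all `x, y ∈ ℤ`,
`E[(N_n(x) − N_n(y))²] ≤ C |x − y| n^{1/2}`. -/
theorem expectation_sq_localTime_diff_le
    {Ω : Type*} [MeasureSpace Ω] [IsProbabilityMeasure (ℙ : Measure Ω)]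
    (η : ℕ → Ω → ℤ)
    (hη_meas : ∀ k, Measurable (η k))
    (hη_indep : iIndepFun η ℙ)
    (hη_one : ∀ k, ℙ {ω | η k ω = 1} = 1/2)
    (hη_negone : ∀ k, ℙ {ω | η k ω = -1} = 1/2) :
    ∃ C > (0 : ℝ), ∀ n : ℕ, 1 ≤ n → ∀ x y : ℤ,
      (∫ ω, ((localTime η n x ω : ℝ) - (localTime η n y ω : ℝ)) ^ 2 ∂ℙ)
        ≤ C * |(x : ℝ) - (y : ℝ)| * (n : ℝ) ^ (1/2 : ℝ) := by
  have hη : IsRademacherSeq η ℙ := ⟨hη_meas, hη_indep, hη_one, hη_negone⟩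
  refine ⟨16, by norm_num, fun n hn x y => (hη.integral_sq_localTime_sub_le n x y).trans ?_⟩
  have hsqrt : √((n + 1 : ℕ) : ℝ) ≤ 2 * √n := by
    rw [Real.sqrt_le_iff, mul_pow, Real.sq_sqrt n.cast_nonneg]
    refine ⟨by positivity, ?_⟩
    have : (1 : ℝ) ≤ n := by exact_mod_cast hn
    push_cast
    linarith
  rw [← Real.sqrt_eq_rpow]
  calc 8 * |(x : ℝ) - y| * √((n + 1 : ℕ) : ℝ) ≤ 8 * |(x : ℝ) - y| * (2 * √n) := by gcongr
    _ = 16 * |(x : ℝ) - y| * √n := by ring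
end
end
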